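/- Splitting a multi-action is the identity: for any τ-free multi-action α with actions in 𝔸 and any A ⊆ 𝔸, applying the communication rules {s(a) ⊔ r(a) → tau : a ∈ 𝔸} to isol(α) ⊔ coisol(α), then deleting all occurrences of tau, yields α, and the result contains no actions from img(s) ∪ img(r). -/

import Mathlib

open Classical in
/-- The communication function for a (possibly infinite) set of rules `C`:
as long as some rule's nonempty left-hand side is contained in the argument,
remove one occurrence of it and add the rule's right-hand side. -/
noncomputable def ΓS {Act : Type*} [DecidableEq Act]
    (C : Set (Multiset Act × Act)) (α : Multiset Act) : Multiset Act :=
  if h : ∃ rule ∈ C, rule.1 ≠ 0 ∧ rule.1 ≤ α then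
    h.choose.2 ::ₘ ΓS C (α - h.choose.1)
  else α
termination_by Multiset.card α
decreasing_by
  obtain ⟨-, hne, hle⟩ := h.choose_spec
  have hpos : 0 < Multiset.card h.choose.1 := Multiset.card_pos.2 hne
  have h1 := Multiset.card_sub hle
  have h2 := Multiset.card_le_card hle
  omega

open Classical in
/-- The `A`-isolation of a multi-action. -/
noncomputable def isol {Act : Type*} (A : Set Act) (s r : Act → Act)
    (α : Multiset Act) : Multiset Act :=
  α.bind fun a => if a ∈ A then {a, s a} else {r a}

open Classical in
/-- The `A`-coisolation of a multi-action. -/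
noncomputable def coisol {Act : Type*} (A : Set Act) (s r : Act → Act)
    (α : Multiset Act) : Multiset Act :=
  α.bind fun a => if a ∈ A then {r a} else {a, s a}

/-! `isol α + coisol α = α + s(α) + r(α)`. In a multi-action of the form
`β + s(γ) + r(γ)` with `γ ⊆ 𝔸` and `β` free of `s(𝔸)`, an occurrence of `s a` must come from
`s(γ)` (the images of `s` and `r` are disjoint), so `a ∈ γ` by injectivity of `s`; hence every
communication `ΓS` can fire consumes one pair `s a, r a` with `a ∈ γ`, and along the recursion
of `ΓS` the result is `|γ|` copies of `tau` plus `β`. With `β = γ = α`, hiding `tau` gives `α`. -/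

open Multiset

theorem isol_add_coisol {Act : Type*} (A : Set Act) (s r : Act → Act) (α : Multiset Act) :
    isol A s r α + coisol A s r α = α + α.map s + α.map r := by
  induction α using Multiset.induction with
  | empty => simp [isol, coisol]
  | cons a α ih =>
    simp only [isol, coisol, cons_bind, map_cons] at *
    split_ifs <;>
    · rw [add_add_add_comm, ih]
      simp only [insert_eq_cons, ← singleton_add]
      abel

section CommRules

variable {Act : Type*} {𝔸 : Set Act} {s r : Act → Act} {β γ : Multiset Act}

def commRules (𝔸 : Set Act) (s r : Act → Act) (tau : Act) : Set (Multiset Act × Act) :=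
  {rule | ∃ a ∈ 𝔸, rule = (({s a, r a} : Multiset Act), tau)}

theorem add_map_cons_add_map_cons (a : Act) :
    β + (a ::ₘ γ).map s + (a ::ₘ γ).map r = {s a, r a} + (β + γ.map s + γ.map r) := by
  simp only [insert_eq_cons, ← singleton_add, map_add, map_singleton]
  abel

theorem mem_of_apply_mem_add_map_add_map (hs : Set.InjOn s 𝔸) (himg : s '' 𝔸 ∩ r '' 𝔸 = ∅)
    (hβ : ∀ x ∈ β, x ∉ s '' 𝔸) (hγ : ∀ a ∈ γ, a ∈ 𝔸) {a : Act} (ha : a ∈ 𝔸)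
    (hsa : s a ∈ β + γ.map s + γ.map r) : a ∈ γ := by
  rcases mem_add.1 hsa with hsa | hsa
  · rcases mem_add.1 hsa with hsa | hsa
    · exact absurd (Set.mem_image_of_mem s ha) (hβ _ hsa)
    · obtain ⟨b, hb, hba⟩ := mem_map.1 hsa
      rwa [← hs (hγ b hb) ha hba]
  · obtain ⟨b, hb, hba⟩ := mem_map.1 hsa
    exact (Set.eq_empty_iff_forall_notMem.1 himg (s a)
      ⟨Set.mem_image_of_mem s ha, hba ▸ Set.mem_image_of_mem r (hγ b hb)⟩).elim

variable [DecidableEq Act]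

theorem ΓS_commRules_add_map_add_map (tau : Act) (hs : Set.InjOn s 𝔸)
    (himg : s '' 𝔸 ∩ r '' 𝔸 = ∅) (hβ : ∀ x ∈ β, x ∉ s '' 𝔸) (hγ : ∀ a ∈ γ, a ∈ 𝔸) :
    ΓS (commRules 𝔸 s r tau) (β + γ.map s + γ.map r) = replicate (card γ) tau + β := by
  suffices h : ∀ μ γ, (∀ a ∈ γ, a ∈ 𝔸) → μ = β + γ.map s + γ.map r →
      ΓS (commRules 𝔸 s r tau) μ = replicate (card γ) tau + β from h _ γ hγ rfl
  intro μ
  induction μ using ΓS.induct (commRules 𝔸 s r tau) with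
  | case1 μ happ ih =>
    rintro γ hγ rfl
    rw [ΓS, dif_pos happ]
    obtain ⟨⟨a, ha, hrule⟩, -, hle⟩ := happ.choose_spec
    rw [hrule] at hle ih ⊢
    have haγ : a ∈ γ := mem_of_apply_mem_add_map_add_map hs himg hβ hγ ha
      (mem_of_le hle (by simp))
    obtain ⟨γ, rfl⟩ := exists_cons_of_mem haγ
    simp only [add_map_cons_add_map_cons, add_tsub_cancel_left] at ih ⊢
    rw [ih γ (fun b hb => hγ b (mem_cons_of_mem hb)) rfl, card_cons, replicate_succ, cons_add]
  | case2 μ hnapp =>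
    rintro γ hγ rfl
    rw [ΓS, dif_neg hnapp]
    obtain rfl : γ = 0 := by
      refine eq_zero_of_forall_notMem fun a haγ => hnapp ?_
      obtain ⟨γ, rfl⟩ := exists_cons_of_mem haγ
      refine ⟨_, ⟨a, hγ a (mem_cons_self a γ), rfl⟩, by simp, ?_⟩
      rw [add_map_cons_add_map_cons]
      exact le_add_right _ _
    simp

end CommRules

theorem stmt10_general {Act : Type*} [DecidableEq Act] (𝔸 A : Set Act)
    (s r : Act → Act) (tau : Act)
    (hs : Set.InjOn s 𝔸)
    (himg : (s '' 𝔸) ∩ (r '' 𝔸) = ∅)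
    (hfresh : ((s '' 𝔸) ∪ (r '' 𝔸)) ∩ 𝔸 = ∅)
    (htau : tau ∉ 𝔸 ∪ (s '' 𝔸) ∪ (r '' 𝔸))
    (α : Multiset Act) (hα : ∀ a ∈ α, a ∈ 𝔸) :
    Multiset.filter (· ≠ tau)
        (ΓS {rule | ∃ a ∈ 𝔸, rule = (({s a, r a} : Multiset Act), tau)}
          (isol A s r α + coisol A s r α)) = α ∧
      ∀ x ∈ ΓS {rule | ∃ a ∈ 𝔸, rule = (({s a, r a} : Multiset Act), tau)}
          (isol A s r α + coisol A s r α),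
        x ∉ (s '' 𝔸) ∪ (r '' 𝔸) := by
  have hnot_fresh : ∀ x ∈ α, x ∉ s '' 𝔸 ∪ r '' 𝔸 := fun x hx h => hfresh.subset ⟨h, hα x hx⟩
  have hsplit : ΓS (commRules 𝔸 s r tau) (isol A s r α + coisol A s r α)
      = replicate (card α) tau + α := by
    rw [isol_add_coisol]
    exact ΓS_commRules_add_map_add_map tau hs himg (fun x hx h => hnot_fresh x hx (Or.inl h)) hα
  have htau_α : tau ∉ α := fun h => htau (Or.inl (Or.inl (hα tau h)))
  rw [← commRules, hsplit, filter_add,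
    filter_eq_nil.2 fun x hx => not_not.2 (eq_of_mem_replicate hx), zero_add,
    filter_eq_self.2 fun x hx => ne_of_mem_of_not_mem hx htau_α]
  refine ⟨rfl, fun x hx => ?_⟩
  rcases mem_add.1 hx with hx | hx
  · rw [eq_of_mem_replicate hx]
    exact fun h => htau (h.imp_left Or.inr)
  · exact hnot_fresh x hx

/-- Splitting a multi-action is the identity: applying the communications
`{s(a) ⊔ r(a) → tau : a ∈ 𝔸}` to `isol(α) ⊔ coisol(α)` and then hiding `tau`
yields `α` back, and the communicated multi-action contains no actions from
`img(s) ∪ img(r)`. -/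
theorem stmt10 {Act : Type*} [DecidableEq Act] (𝔸 A : Set Act)
    (s r : Act → Act) (tau : Act)
    (hA : A ⊆ 𝔸)
    (hs : Set.InjOn s 𝔸) (hr : Set.InjOn r 𝔸)
    (himg : (s '' 𝔸) ∩ (r '' 𝔸) = ∅)
    (hfresh : ((s '' 𝔸) ∪ (r '' 𝔸)) ∩ 𝔸 = ∅)
    (htau : tau ∉ 𝔸 ∪ (s '' 𝔸) ∪ (r '' 𝔸))
    (α : Multiset Act) (hα : ∀ a ∈ α, a ∈ 𝔸) :
    Multiset.filter (· ≠ tau)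
        (ΓS {rule | ∃ a ∈ 𝔸, rule = (({s a, r a} : Multiset Act), tau)}
          (isol A s r α + coisol A s r α)) = α ∧
      ∀ x ∈ ΓS {rule | ∃ a ∈ 𝔸, rule = (({s a, r a} : Multiset Act), tau)}
          (isol A s r α + coisol A s r α),
        x ∉ (s '' 𝔸) ∪ (r '' 𝔸) :=
  stmt10_general 𝔸 A s r tau hs himg hfresh htau α hα
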